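/- A graph G is a k-veto interval graph for some k ≥ 2 if and only if G is a double veto (2-veto) interval graph. -/

import Mathlib

/-- A `k`-veto interval: a closed interval `[l, r]` together with `k` veto
marks, strictly increasing and strictly inside the interval. -/
structure KVetoInterval (k : ℕ) where
  l : ℝ
  r : ℝ
  marks : Fin k → ℝ
  hl : ∀ i, l < marks i
  hr : ∀ i, marks i < r
  hmono : StrictMono marks

/-- Two `k`-veto intervals are adjacent iff they intersect and neither
contains any veto mark of the other: `a_{v_k} < b_l < a_r < b_{v_1}` or
symmetrically. -/
def KVIAdj {k : ℕ} (a b : KVetoInterval k) : Prop :=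
  ((∀ i, a.marks i < b.l) ∧ b.l < a.r ∧ (∀ i, a.r < b.marks i)) ∨
  ((∀ i, b.marks i < a.l) ∧ a.l < b.r ∧ (∀ i, b.r < a.marks i))

/-- `G` is a `k`-veto interval graph. -/
def IsKVetoGraph (k : ℕ) {V : Type*} (G : SimpleGraph V) : Prop :=
  ∃ f : V → KVetoInterval k, ∀ a b : V, G.Adj a b ↔ KVIAdj (f a) (f b)

/-! Since the veto marks are increasing, "every mark lies left of `x`" only concerns the last
mark and "every mark lies right of `x`" only the first, so adjacency of `k`-veto intervals
sees nothing but the two outermost marks. Hence dropping the inner marks of a `k`-veto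
interval, or inserting `k - 2` evenly spaced marks between the two marks of a double veto
interval, preserves adjacency. -/

namespace KVetoInterval

variable {n : ℕ}

theorem forall_marks_lt_iff (a : KVetoInterval (n + 1)) (x : ℝ) :
    (∀ i, a.marks i < x) ↔ a.marks (Fin.last n) < x :=
  ⟨fun h => h _, fun h i => (a.hmono.monotone (Fin.le_last i)).trans_lt h⟩

theorem forall_lt_marks_iff (a : KVetoInterval (n + 1)) (x : ℝ) :
    (∀ i, x < a.marks i) ↔ x < a.marks 0 :=
  ⟨fun h => h _, fun h i => h.trans_le (a.hmono.monotone (Fin.zero_le i))⟩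

theorem kviAdj_iff (a b : KVetoInterval (n + 1)) :
    KVIAdj a b ↔ (a.marks (Fin.last n) < b.l ∧ b.l < a.r ∧ a.r < b.marks 0) ∨
      (b.marks (Fin.last n) < a.l ∧ a.l < b.r ∧ b.r < a.marks 0) := by
  simp only [KVIAdj, forall_marks_lt_iff, forall_lt_marks_iff]

def toTwo (a : KVetoInterval (n + 2)) : KVetoInterval 2 where
  l := a.l
  r := a.r
  marks := ![a.marks 0, a.marks (Fin.last (n + 1))]
  hl i := by fin_cases i <;> exact a.hl _
  hr i := by fin_cases i <;> exact a.hr _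
  hmono := by
    refine Fin.strictMono_iff_lt_succ.mpr fun i => ?_
    fin_cases i
    exact a.hmono Fin.last_pos

theorem kviAdj_toTwo (a b : KVetoInterval (n + 2)) :
    KVIAdj a.toTwo b.toTwo ↔ KVIAdj a b := by
  rw [kviAdj_iff, kviAdj_iff]
  rfl

noncomputable def ofTwo (a : KVetoInterval 2) : KVetoInterval (n + 2) :=
  have hstep : 0 < (a.marks 1 - a.marks 0) / (n + 1) :=
    div_pos (sub_pos.mpr (a.hmono zero_lt_one)) n.cast_add_one_pos
  { l := a.l
    r := a.r
    marks := fun i => a.marks 0 + i * ((a.marks 1 - a.marks 0) / (n + 1))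
    hl := fun i => by
      have := a.hl 0
      have : (0 : ℝ) ≤ i := i.val.cast_nonneg
      nlinarith
    hr := fun i => by
      have := a.hr 1
      have : (i : ℝ) ≤ n + 1 := by exact_mod_cast i.is_le
      have : (n + 1) * ((a.marks 1 - a.marks 0) / (n + 1)) = a.marks 1 - a.marks 0 :=
        mul_div_cancel₀ _ n.cast_add_one_pos.ne'
      nlinarith
    hmono := fun i j hij => by
      have : (i : ℝ) < j := by exact_mod_cast hij
      dsimp only
      gcongr }

theorem ofTwo_marks_zero (a : KVetoInterval 2) :
    (ofTwo a : KVetoInterval (n + 2)).marks 0 = a.marks 0 := by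
  simp [ofTwo]

theorem ofTwo_marks_last (a : KVetoInterval 2) :
    (ofTwo a : KVetoInterval (n + 2)).marks (Fin.last (n + 1)) = a.marks 1 := by
  simp only [ofTwo, Fin.val_last]
  push_cast
  field_simp
  ring

theorem kviAdj_ofTwo (a b : KVetoInterval 2) :
    KVIAdj (ofTwo a : KVetoInterval (n + 2)) (ofTwo b) ↔ KVIAdj a b := by
  rw [kviAdj_iff, kviAdj_iff, ofTwo_marks_zero, ofTwo_marks_zero, ofTwo_marks_last,
    ofTwo_marks_last]
  rfl

end KVetoInterval

theorem IsKVetoGraph.of_kviAdj_iff {m n : ℕ} {V : Type*} {G : SimpleGraph V}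
    (φ : KVetoInterval m → KVetoInterval n) (hφ : ∀ a b, KVIAdj (φ a) (φ b) ↔ KVIAdj a b)
    (hG : IsKVetoGraph m G) : IsKVetoGraph n G :=
  let ⟨f, hf⟩ := hG
  ⟨φ ∘ f, fun a b => (hf a b).trans (hφ _ _).symm⟩

theorem stmt_13 {V : Type*} (G : SimpleGraph V) (k : ℕ) (hk : 2 ≤ k) :
    IsKVetoGraph k G ↔ IsKVetoGraph 2 G := by
  obtain ⟨n, rfl⟩ := Nat.exists_eq_add_of_le' hk
  exact ⟨.of_kviAdj_iff KVetoInterval.toTwo KVetoInterval.kviAdj_toTwo,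
    .of_kviAdj_iff KVetoInterval.ofTwo KVetoInterval.kviAdj_ofTwo⟩
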